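/- Let μ be a probability measure on ℝ × ℝ^k (not necessarily a product), write x = (x₁, x⊥), let c > 0, assume μ({x : x₁ = 0}) = 0 and ∫ ‖x⊥‖² dμ < ∞, and let labels be generated by the calibrated logistic model with w* = c·e₁. Define Err = ∫ min(σ(c·x₁), 1−σ(c·x₁)) dμ, m = ∫ σ(c·x₁)·(1−σ(c·x₁)) dμ, A = ∫ σ(c·x₁)·(1−σ(c·x₁))·x⊥·x⊥ᵀ dμ, and C₁ = A/m (assume m > 0). Let C₀ be a positive definite k×k matrix and s > 0 with ‖C₀^{−1/2} C₁ C₀^{−1/2}‖₂ ≤ 1/s. Then A ⪯ (Err/s)·C₀, equivalently (s/(4·Err))·A ⪯ (1/4)·C₀, in the Loewner order. -/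

import Mathlib

/-!
Pointwise `σ(1 - σ) ≤ min(σ, 1 - σ)`, so `m ≤ Err`. The norm bound says
`C₀^{-1/2} C₁ C₀^{-1/2} ⪯ (1/s) I`; conjugating back by `C₀^{1/2}` gives `C₁ ⪯ C₀ / s`, hence
`A = m C₁ ⪯ (m / s) C₀ ⪯ (Err / s) C₀`, using `C₀ ⪰ 0`. The second inequality is the first one
scaled by `s / (4 Err)`.
-/

open MeasureTheory
open scoped Matrix.Norms.L2Operator

section
open scoped ComplexOrder

/-- The square root of a positive semidefinite matrix, as defined in the older Mathlib
(removed since). -/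
noncomputable def Matrix.PosSemidef.sqrt {n : Type*} [Fintype n] [DecidableEq n]
    {𝕜 : Type*} [RCLike 𝕜] {A : Matrix n n 𝕜} (hA : A.PosSemidef) : Matrix n n 𝕜 :=
  hA.1.eigenvectorUnitary.1 * Matrix.diagonal ((↑) ∘ (√·) ∘ hA.1.eigenvalues) *
    (star hA.1.eigenvectorUnitary : Matrix n n 𝕜)

end

/-- The logistic sigmoid `σ(a) = 1 / (1 + exp (−a))`. -/
noncomputable def sigmoid (a : ℝ) : ℝ := 1 / (1 + Real.exp (-a))

open scoped Matrix MatrixOrder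

lemma sigmoid_eq_real_sigmoid : sigmoid = Real.sigmoid := by
  ext a
  rw [sigmoid, Real.sigmoid_def, one_div]

lemma sigmoid_mem_unitInterval (a : ℝ) : sigmoid a ∈ unitInterval := by
  rw [sigmoid_eq_real_sigmoid]
  exact ⟨Real.sigmoid_nonneg a, Real.sigmoid_le_one a⟩

lemma norm_le_one_of_mem_unitInterval {p : ℝ} (hp : p ∈ unitInterval) : ‖p‖ ≤ 1 := by
  rw [Real.norm_of_nonneg hp.1]
  exact hp.2

lemma mul_one_sub_mem_unitInterval {p : ℝ} (hp : p ∈ unitInterval) : p * (1 - p) ∈ unitInterval :=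
  unitInterval.mul_mem hp (Set.Icc.mem_iff_one_sub_mem.mp hp)

lemma mul_one_sub_le_min {p : ℝ} (hp : p ∈ unitInterval) : p * (1 - p) ≤ min p (1 - p) :=
  le_min (mul_le_of_le_one_right hp.1 (by linarith [hp.1]))
    (mul_le_of_le_one_left (by linarith [hp.2]) hp.2)

namespace Matrix

variable {n : Type*}

lemma smul_le_mul_smul_of_le_smul {C₀ C₁ : Matrix n n ℝ} (hC₀ : C₀.PosSemidef) {t a b : ℝ}
    (h : C₁ ≤ t • C₀) (ht : 0 ≤ t) (ha : 0 ≤ a) (hab : a ≤ b) : a • C₁ ≤ (b * t) • C₀ := by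
  have hsplit : (b * t) • C₀ - a • C₁ = ((b - a) * t) • C₀ + a • (t • C₀ - C₁) := by module
  rw [le_iff, hsplit]
  exact (hC₀.smul (mul_nonneg (sub_nonneg.2 hab) ht)).add (PosSemidef.smul h ha)

variable [Fintype n]

lemma dotProduct_mulVec_le_l2_opNorm_mul [DecidableEq n] (M : Matrix n n ℝ) (x : n → ℝ) :
    x ⬝ᵥ M *ᵥ x ≤ ‖M‖ * (x ⬝ᵥ x) := by
  set w : EuclideanSpace ℝ n := WithLp.toLp 2 x
  have hx : x ⬝ᵥ x = ‖w‖ ^ 2 := by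
    rw [← real_inner_self_eq_norm_sq, EuclideanSpace.inner_toLp_toLp, star_trivial]
  calc x ⬝ᵥ M *ᵥ x = inner ℝ w (WithLp.toLp 2 (M *ᵥ x)) := by
        rw [EuclideanSpace.inner_toLp_toLp, star_trivial, dotProduct_comm]
    _ ≤ ‖w‖ * ‖WithLp.toLp 2 (M *ᵥ x)‖ := real_inner_le_norm _ _
    _ ≤ ‖w‖ * (‖M‖ * ‖w‖) := by gcongr; exact M.l2_opNorm_mulVec w
    _ = ‖M‖ * (x ⬝ᵥ x) := by rw [hx]; ring

lemma IsHermitian.le_smul_one_of_l2_opNorm_le [DecidableEq n] {M : Matrix n n ℝ}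
    (hM : M.IsHermitian) {t : ℝ} (h : ‖M‖ ≤ t) : M ≤ t • 1 := by
  refine PosSemidef.of_dotProduct_mulVec_nonneg ((isHermitian_one.smul (.all t)).sub hM)
    fun x => ?_
  have hx := M.dotProduct_mulVec_le_l2_opNorm_mul x
  have hxx : 0 ≤ x ⬝ᵥ x := dotProduct_self_star_nonneg x
  rw [star_trivial, sub_mulVec, dotProduct_sub, smul_mulVec, one_mulVec, dotProduct_smul,
    smul_eq_mul, sub_nonneg]
  nlinarith

lemma PosSemidef.sqrt_eq_cfcSqrt [DecidableEq n] {C : Matrix n n ℝ} (hC : C.PosSemidef) :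
    hC.sqrt = CFC.sqrt C := by
  rw [CFC.sqrt_eq_real_sqrt C hC.nonneg, cfcₙ_eq_cfc, hC.1.cfc_eq]
  rfl

lemma le_smul_of_l2_opNorm_conj_sqrt_inv_le [DecidableEq n] {C₀ C₁ : Matrix n n ℝ}
    (hC₀ : C₀.PosDef) (hC₁ : C₁.IsHermitian) {t : ℝ}
    (h : ‖(CFC.sqrt C₀)⁻¹ * C₁ * (CFC.sqrt C₀)⁻¹‖ ≤ t) : C₁ ≤ t • C₀ := by
  set S := CFC.sqrt C₀
  have hS : 0 ≤ S := CFC.sqrt_nonneg C₀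
  have hSS : S * S = C₀ := CFC.sqrt_mul_sqrt_self C₀ hC₀.posSemidef.nonneg
  have hSdet : IsUnit S.det :=
    (isUnit_iff_isUnit_det S).1 ((CFC.isUnit_sqrt_iff C₀ hC₀.posSemidef.nonneg).2 hC₀.isUnit)
  have hSinv : S⁻¹.IsHermitian := (nonneg_iff_posSemidef.mp hS).isHermitian.inv
  have hB : (S⁻¹ * C₁ * S⁻¹).IsHermitian := by
    simpa only [hSinv.eq] using isHermitian_conjTranspose_mul_mul S⁻¹ hC₁
  have hconj := conjugate_le_conjugate_of_nonneg (hB.le_smul_one_of_l2_opNorm_le h) hS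
  calc C₁ = S * (S⁻¹ * C₁ * S⁻¹) * S := by
        rw [← Matrix.mul_assoc, ← Matrix.mul_assoc, mul_nonsing_inv _ hSdet, Matrix.one_mul,
          Matrix.mul_assoc, nonsing_inv_mul _ hSdet, Matrix.mul_one]
    _ ≤ S * (t • 1) * S := hconj
    _ = t • C₀ := by rw [Matrix.mul_smul, Matrix.mul_one, Matrix.smul_mul, hSS]

end Matrix

section

variable {α : Type*} [MeasurableSpace α] {μ : Measure α}

lemma integrable_of_mem_unitInterval [IsFiniteMeasure μ] {f : α → ℝ}
    (hf : AEStronglyMeasurable f μ) (h01 : ∀ x, f x ∈ unitInterval) : Integrable f μ :=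
  .of_bound hf 1 (ae_of_all _ fun x => norm_le_one_of_mem_unitInterval (h01 x))

lemma integral_mul_one_sub_le_integral_min [IsFiniteMeasure μ] {p : α → ℝ}
    (hp : AEStronglyMeasurable p μ) (hp01 : ∀ x, p x ∈ unitInterval) :
    ∫ x, p x * (1 - p x) ∂μ ≤ ∫ x, min (p x) (1 - p x) ∂μ := by
  have hq : AEStronglyMeasurable (fun x => 1 - p x) μ := aestronglyMeasurable_const.sub hp
  refine integral_mono ?_ ?_ fun x => mul_one_sub_le_min (hp01 x)
  · exact integrable_of_mem_unitInterval (hp.mul hq) fun x => mul_one_sub_mem_unitInterval (hp01 x)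
  · refine integrable_of_mem_unitInterval (hp.inf hq) fun x => ⟨?_, ?_⟩
    · exact le_min (hp01 x).1 (sub_nonneg.2 (hp01 x).2)
    · exact (min_le_left _ _).trans (hp01 x).2

lemma integrable_mul_coord_mul_coord {n : Type*} [Fintype n] {g : α → ℝ} {C : ℝ}
    (hg : AEStronglyMeasurable g μ) (hg_bdd : ∀ᵐ x ∂μ, ‖g x‖ ≤ C)
    {f : α → EuclideanSpace ℝ n} (hf : MemLp f 2 μ) (i j : n) :
    Integrable (fun x => g x * (f x i * f x j)) μ := by
  have hcoord (i : n) : MemLp (fun x => f x i) 2 μ :=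
    hf.continuousLinearMap_comp (EuclideanSpace.proj (𝕜 := ℝ) i)
  exact ((hcoord i).integrable_mul (hcoord j)).bdd_mul hg hg_bdd

lemma posSemidef_of_integral_weight_mul_mul {n : Type*} [Fintype n] {g : α → ℝ}
    (hg : 0 ≤ᵐ[μ] g) {f : α → n → ℝ}
    (hint : ∀ i j, Integrable (fun x => g x * (f x i * f x j)) μ) :
    (Matrix.of fun i j => ∫ x, g x * (f x i * f x j) ∂μ).PosSemidef := by
  refine Matrix.PosSemidef.of_dotProduct_mulVec_nonneg ?_ fun v => ?_
  · ext i j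
    simp only [Matrix.conjTranspose_apply, Matrix.of_apply, star_trivial, mul_comm (f _ i)]
  · have hquad : ∫ x, g x * (∑ i, v i * f x i) ^ 2 ∂μ
        = star v ⬝ᵥ (Matrix.of fun i j => ∫ x, g x * (f x i * f x j) ∂μ) *ᵥ v := by
      calc ∫ x, g x * (∑ i, v i * f x i) ^ 2 ∂μ
          = ∫ x, ∑ i, ∑ j, v i * (g x * (f x i * f x j) * v j) ∂μ := by
            congr 1; ext x
            rw [sq, Finset.sum_mul_sum, Finset.mul_sum]
            refine Finset.sum_congr rfl fun i _ => ?_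
            rw [Finset.mul_sum]
            refine Finset.sum_congr rfl fun j _ => ?_
            ring
        _ = ∑ i, ∑ j, v i * ((∫ x, g x * (f x i * f x j) ∂μ) * v j) := by
            rw [integral_finsetSum _ fun i _ =>
              integrable_finsetSum _ fun j _ => ((hint i j).mul_const _).const_mul _]
            refine Finset.sum_congr rfl fun i _ => ?_
            rw [integral_finsetSum _ fun j _ => ((hint i j).mul_const _).const_mul _]
            refine Finset.sum_congr rfl fun j _ => ?_
            rw [integral_const_mul, integral_mul_const]
        _ = _ := by
            simp only [star_trivial, dotProduct, Matrix.mulVec, Matrix.of_apply, Finset.mul_sum]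
    rw [← hquad]
    exact integral_nonneg_of_ae (hg.mono fun x hx => mul_nonneg hx (sq_nonneg _))

end

theorem key_matrix_inequality_general {k : ℕ} (μ : Measure (ℝ × EuclideanSpace ℝ (Fin k)))
    [IsProbabilityMeasure μ] (c : ℝ)
    (hint : Integrable (fun x : ℝ × EuclideanSpace ℝ (Fin k) => ‖x.2‖ ^ 2) μ)
    (Err : ℝ) (hErr_def : Err = ∫ x, min (sigmoid (c * x.1)) (1 - sigmoid (c * x.1)) ∂μ)
    (m : ℝ) (hm_def : m = ∫ x, sigmoid (c * x.1) * (1 - sigmoid (c * x.1)) ∂μ)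
    (hm_pos : 0 < m)
    (A C₁ : Matrix (Fin k) (Fin k) ℝ)
    (hA : A = Matrix.of fun i j : Fin k =>
        ∫ x, sigmoid (c * x.1) * (1 - sigmoid (c * x.1)) * (x.2 i * x.2 j) ∂μ)
    (hC₁ : C₁ = m⁻¹ • A)
    (C₀ : Matrix (Fin k) (Fin k) ℝ) (hC₀ : C₀.PosDef) (s : ℝ) (hs : 0 < s)
    (hnorm : ‖(hC₀.posSemidef.sqrt)⁻¹ * C₁ * (hC₀.posSemidef.sqrt)⁻¹‖ ≤ 1 / s) :
    ((Err / s) • C₀ - A).PosSemidef ∧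
      ((1 / 4 : ℝ) • C₀ - (s / (4 * Err)) • A).PosSemidef := by
  set p : ℝ × EuclideanSpace ℝ (Fin k) → ℝ := fun x => sigmoid (c * x.1)
  have hp : AEStronglyMeasurable p μ := by
    simp only [p, sigmoid_eq_real_sigmoid]
    fun_prop
  have hp01 (x) : p x ∈ unitInterval := sigmoid_mem_unitInterval _
  have hm_le_Err : m ≤ Err := by
    rw [hm_def, hErr_def]
    exact integral_mul_one_sub_le_integral_min hp hp01
  have hA_psd : A.PosSemidef := by
    have hw01 (x) : p x * (1 - p x) ∈ unitInterval := mul_one_sub_mem_unitInterval (hp01 x)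
    rw [hA]
    refine posSemidef_of_integral_weight_mul_mul (ae_of_all _ fun x => (hw01 x).1) fun i j =>
      integrable_mul_coord_mul_coord (hp.mul (aestronglyMeasurable_const.sub hp))
        (ae_of_all _ fun x => norm_le_one_of_mem_unitInterval (hw01 x))
        ((memLp_two_iff_integrable_sq_norm measurable_snd.aestronglyMeasurable).2 hint) i j
  have hA_eq : A = m • C₁ := by rw [hC₁, smul_smul, mul_inv_cancel₀ hm_pos.ne', one_smul]
  have hC₁_le : C₁ ≤ (1 / s) • C₀ := by
    refine Matrix.le_smul_of_l2_opNorm_conj_sqrt_inv_le hC₀ ?_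
      (hC₀.posSemidef.sqrt_eq_cfcSqrt ▸ hnorm)
    exact hC₁ ▸ (hA_psd.smul (inv_nonneg.2 hm_pos.le)).isHermitian
  have hfirst : ((Err / s) • C₀ - A).PosSemidef := by
    rw [hA_eq, div_eq_mul_one_div]
    exact Matrix.smul_le_mul_smul_of_le_smul hC₀.posSemidef hC₁_le (by positivity) hm_pos.le
      hm_le_Err
  have hErr_pos : 0 < Err := hm_pos.trans_le hm_le_Err
  refine ⟨hfirst, ?_⟩
  convert hfirst.smul (show 0 ≤ s / (4 * Err) by positivity) using 1
  rw [smul_sub, smul_smul]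
  congr 2
  field_simp

/-- Let `μ` be a probability measure on `ℝ × ℝᵏ` (not necessarily a product) with
`μ({x₁ = 0}) = 0` and `∫ ‖x⊥‖² dμ < ∞`, labels generated by the calibrated logistic
model with `w* = c e₁`, `c > 0`. With `Err = ∫ min (σ(c x₁)) (1 − σ(c x₁)) dμ`,
`m = ∫ σ(c x₁)(1 − σ(c x₁)) dμ > 0`, `A = ∫ σ(c x₁)(1 − σ(c x₁)) x⊥ x⊥ᵀ dμ`,
`C₁ = A / m`, and `C₀` positive definite with `‖C₀^{−1/2} C₁ C₀^{−1/2}‖₂ ≤ 1/s` for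
some `s > 0`, we have `A ⪯ (Err / s) C₀`, equivalently
`(s / (4 Err)) A ⪯ (1/4) C₀`, in the Loewner order. This is the key matrix
inequality `Σ_passive,−1 ≻ (s/(4 Err)) Σ_active,−1` behind `DE(ε) > s/(4 Err)`. -/
theorem key_matrix_inequality {k : ℕ} (μ : Measure (ℝ × EuclideanSpace ℝ (Fin k)))
    [IsProbabilityMeasure μ] (c : ℝ) (hc : 0 < c)
    (h0 : μ {x : ℝ × EuclideanSpace ℝ (Fin k) | x.1 = 0} = 0)
    (hint : Integrable (fun x : ℝ × EuclideanSpace ℝ (Fin k) => ‖x.2‖ ^ 2) μ)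
    (Err : ℝ) (hErr_def : Err = ∫ x, min (sigmoid (c * x.1)) (1 - sigmoid (c * x.1)) ∂μ)
    (m : ℝ) (hm_def : m = ∫ x, sigmoid (c * x.1) * (1 - sigmoid (c * x.1)) ∂μ)
    (hm_pos : 0 < m)
    (A C₁ : Matrix (Fin k) (Fin k) ℝ)
    (hA : A = Matrix.of fun i j : Fin k =>
        ∫ x, sigmoid (c * x.1) * (1 - sigmoid (c * x.1)) * (x.2 i * x.2 j) ∂μ)
    (hC₁ : C₁ = m⁻¹ • A)
    (C₀ : Matrix (Fin k) (Fin k) ℝ) (hC₀ : C₀.PosDef) (s : ℝ) (hs : 0 < s)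
    (hnorm : ‖(hC₀.posSemidef.sqrt)⁻¹ * C₁ * (hC₀.posSemidef.sqrt)⁻¹‖ ≤ 1 / s) :
    ((Err / s) • C₀ - A).PosSemidef ∧
      ((1 / 4 : ℝ) • C₀ - (s / (4 * Err)) • A).PosSemidef :=
  key_matrix_inequality_general μ c hint Err hErr_def m hm_def hm_pos A C₁ hA hC₁ C₀ hC₀ s hs hnorm
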